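/- Fix p ≥ 2 and consider the cyclic ladder variable gadget G^x on 16p vertices: cycles t_0,...,t_{4p-1} and b_0,...,b_{4p-1} (indices mod 4p) with rungs t_i b_i, plus vertices u_i adjacent to t_{i-1}, t_i, t_{i+1} and vertices d_i adjacent to b_{i-1}, b_i, b_{i+1}, for i = 0,...,4p-1. The fillable non-edges are exactly the diagonals t_i b_{i+1} and t_{i+1} b_i. Then there are exactly two sets F of fillable non-edges such that G^x + F is C4-free: the set of all edges t_i b_{i+1} (i mod 4p), and the set of all edges t_{i+1} b_i (i mod 4p). -/

import Mathlib

/-- The cycle on 4 vertices. -/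
def C4 : SimpleGraph (Fin 4) :=
  SimpleGraph.fromEdgeSet {s(0,1), s(1,2), s(2,3), s(3,0)}

/-- The cyclic ladder variable gadget on `16 p` vertices. Vertices are pairs
`(j, i)` with `i : ZMod (4 p)`, where `(0, i) = tᵢ`, `(1, i) = bᵢ`,
`(2, i) = uᵢ`, `(3, i) = dᵢ`. Edges: the cycles `tᵢ tᵢ₊₁` and `bᵢ bᵢ₊₁`, the
rungs `tᵢ bᵢ`, `uᵢ` adjacent to `tᵢ₋₁, tᵢ, tᵢ₊₁`, and `dᵢ` adjacent to
`bᵢ₋₁, bᵢ, bᵢ₊₁`. -/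
def ladder (p : ℕ) : SimpleGraph (Fin 4 × ZMod (4 * p)) :=
  SimpleGraph.fromRel (fun x y =>
    (x.1 = 0 ∧ y.1 = 0 ∧ y.2 = x.2 + 1) ∨
    (x.1 = 1 ∧ y.1 = 1 ∧ y.2 = x.2 + 1) ∨
    (x.1 = 0 ∧ y.1 = 1 ∧ y.2 = x.2) ∨
    (x.1 = 2 ∧ y.1 = 0 ∧ (y.2 = x.2 - 1 ∨ y.2 = x.2 ∨ y.2 = x.2 + 1)) ∨
    (x.1 = 3 ∧ y.1 = 1 ∧ (y.2 = x.2 - 1 ∨ y.2 = x.2 ∨ y.2 = x.2 + 1)))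

/-- The diagonals `tᵢ bᵢ₊₁`. -/
def diagT (p : ℕ) : Set (Sym2 (Fin 4 × ZMod (4 * p))) :=
  {e | ∃ i : ZMod (4 * p), e = s(((0 : Fin 4), i), ((1 : Fin 4), i + 1))}

/-- The diagonals `tᵢ₊₁ bᵢ`. -/
def diagB (p : ℕ) : Set (Sym2 (Fin 4 × ZMod (4 * p))) :=
  {e | ∃ i : ZMod (4 * p), e = s(((0 : Fin 4), i + 1), ((1 : Fin 4), i))}

/-!
Adjacency in the ladder, with or without either family of diagonals, depends only on the kinds of
the two vertices and on the difference of their indices, which is `-1`, `0` or `1`. Hence an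
induced `C4` lies within index distance two of one of its corners, and since `4 < 4p` it lifts
to the same configuration in the ladder indexed by `ℤ`, where a finite check rules it out for
both diagonal families.

Conversely, let `F` be a `C4`-free filling. Each square `tᵢ tᵢ₊₁ bᵢ₊₁ bᵢ` needs a diagonal, and
the diagonals `tᵢ bᵢ₊₁` and `tᵢ₊₂ bᵢ₊₁` would close the induced `C4` `tᵢ bᵢ₊₁ tᵢ₊₂ uᵢ₊₁`
(symmetrically with `dᵢ₊₁` at the bottom). So the direction of the diagonal in square `i`
propagates to square `i + 1`, all the way around the cycle.
-/

open SimpleGraph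

theorem C4_adj_iff {i j : Fin 4} : C4.Adj i j ↔ j = i + 1 ∨ i = j + 1 := by
  fin_cases i <;> fin_cases j <;> simp [C4]

def IsInducedSquare {V : Type*} (r : V → V → Prop) (a b c d : V) : Prop :=
  r a b ∧ r b c ∧ r c d ∧ r d a ∧ ¬r a c ∧ ¬r b d ∧ a ≠ c ∧ b ≠ d

instance {V : Type*} [DecidableEq V] (r : V → V → Prop) [DecidableRel r] (a b c d : V) :
    Decidable (IsInducedSquare r a b c d) := by
  unfold IsInducedSquare; infer_instance

theorem isEmpty_C4_embedding_iff {V : Type*} (G : SimpleGraph V) :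
    IsEmpty (C4 ↪g G) ↔ ∀ a b c d, ¬IsInducedSquare G.Adj a b c d := by
  constructor
  · rintro hempty a b c d ⟨hab, hbc, hcd, hda, hac, hbd, hac', hbd'⟩
    refine hempty.false ⟨⟨![a, b, c, d], fun i j hij => ?_⟩, fun {i j} => ?_⟩
    · fin_cases i <;> fin_cases j <;>
        simp_all [hab.ne, hbc.ne, hcd.ne, hda.ne, hab.ne', hbc.ne', hcd.ne', hda.ne', eq_comm]
    · change G.Adj (![a, b, c, d] i) (![a, b, c, d] j) ↔ C4.Adj i j
      rw [C4_adj_iff]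
      fin_cases i <;> fin_cases j <;> simp [hab, hbc, hcd, hda, hab.symm, hbc.symm, hcd.symm,
        hda.symm, hac, hbd, mt G.adj_symm hac, mt G.adj_symm hbd]
  · refine fun h => ⟨fun f => h (f 0) (f 1) (f 2) (f 3) ⟨?_, ?_, ?_, ?_, ?_, ?_, ?_, ?_⟩⟩ <;>
      simp [C4_adj_iff]

theorem ZMod.intCast_eq_intCast_iff_of_abs_lt {n : ℕ} {a b : ℤ} (h : |a - b| < n) :
    (a : ZMod n) = b ↔ a = b := by
  rw [ZMod.intCast_eq_intCast_iff_dvd_sub]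
  refine ⟨fun hd => ?_, fun hab => by simp [hab]⟩
  have := Int.eq_zero_of_abs_lt_dvd hd (by rwa [abs_sub_comm])
  omega

theorem ZMod.forall_of_add_one {n : ℕ} [NeZero n] {P : ZMod n → Prop} {i₀ : ZMod n} (h₀ : P i₀)
    (step : ∀ i, P i → P (i + 1)) (i : ZMod n) : P i := by
  have key (k : ℕ) : P (i₀ + k) := by
    induction k with
    | zero => simpa using h₀
    | succ k ih => simpa [add_assoc] using step _ ih
  simpa using key (i - i₀).val

theorem ZMod.forall_and_not_or_forall_and_not {n : ℕ} [NeZero n] {P Q : ZMod n → Prop}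
    (hPQ : ∀ i, P i ∨ Q i) (hP : ∀ i, P i → ¬Q (i + 1)) (hQ : ∀ i, Q i → ¬P (i + 1)) :
    (∀ i, P i ∧ ¬Q i) ∨ (∀ i, Q i ∧ ¬P i) := by
  have spread {P Q : ZMod n → Prop} (hPQ : ∀ i, P i ∨ Q i) (hP : ∀ i, P i → ¬Q (i + 1))
      (h₀ : P 0) (i : ZMod n) : P i ∧ ¬Q i := by
    have hall := ZMod.forall_of_add_one h₀ fun i hi => (hPQ (i + 1)).resolve_right (hP i hi)
    exact ⟨hall i, by simpa using hP (i - 1) (hall _)⟩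
  rcases hPQ 0 with h₀ | h₀
  · exact .inl (spread hPQ hP h₀)
  · exact .inr (spread (fun i => (hPQ i).symm) hQ h₀)

def ladderOffsets : Fin 4 → Fin 4 → List ℤ
  | 0, 0 | 1, 1 => [1, -1]
  | 0, 1 | 1, 0 => [0]
  | 2, 0 | 0, 2 | 3, 1 | 1, 3 => [-1, 0, 1]
  | _, _ => []

def diagOffsets (ε : ℤ) : Fin 4 → Fin 4 → List ℤ
  | 0, 1 => [ε]
  | 1, 0 => [-ε]
  | _, _ => []

/-- Kinds `0, 1, 2, 3` stand for `t, b, u, d`; `L j k` lists the index offsets at which a vertex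
of kind `j` sees a vertex of kind `k`. -/
def OffsetAdj (L : Fin 4 → Fin 4 → List ℤ) {R : Type*} [AddGroupWithOne R]
    (x y : Fin 4 × R) : Prop :=
  ∃ e ∈ L x.1 y.1, y.2 = x.2 + e

instance (L : Fin 4 → Fin 4 → List ℤ) : DecidableRel (OffsetAdj L (R := ℤ)) := fun _ _ => by
  unfold OffsetAdj; infer_instance

theorem ladder_adj_iff {p : ℕ} (x y : Fin 4 × ZMod (4 * p)) :
    (ladder p).Adj x y ↔ OffsetAdj ladderOffsets x y := by
  have : Nontrivial (ZMod (4 * p)) := ZMod.nontrivial_iff.2 (by omega)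
  have h1 : (1 : ZMod (4 * p)) ≠ 0 := one_ne_zero
  obtain ⟨j, i⟩ := x
  obtain ⟨k, i'⟩ := y
  fin_cases j <;> fin_cases k <;> simp [ladder, OffsetAdj, ladderOffsets] <;> grind

theorem fromEdgeSet_diagT_adj_iff {p : ℕ} (x y : Fin 4 × ZMod (4 * p)) :
    (fromEdgeSet (diagT p)).Adj x y ↔ OffsetAdj (diagOffsets 1) x y := by
  obtain ⟨j, i⟩ := x
  obtain ⟨k, i'⟩ := y
  fin_cases j <;> fin_cases k <;>
    simp [diagT, OffsetAdj, diagOffsets, eq_add_neg_iff_add_eq, eq_comm]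

theorem fromEdgeSet_diagB_adj_iff {p : ℕ} (x y : Fin 4 × ZMod (4 * p)) :
    (fromEdgeSet (diagB p)).Adj x y ↔ OffsetAdj (diagOffsets (-1)) x y := by
  obtain ⟨j, i⟩ := x
  obtain ⟨k, i'⟩ := y
  fin_cases j <;> fin_cases k <;>
    simp [diagB, OffsetAdj, diagOffsets, eq_add_neg_iff_add_eq, eq_comm]

theorem offsetAdj_append {L L' : Fin 4 → Fin 4 → List ℤ} {R : Type*} [AddGroupWithOne R]
    (x y : Fin 4 × R) :
    OffsetAdj (fun j k => L j k ++ L' j k) x y ↔ OffsetAdj L x y ∨ OffsetAdj L' x y := by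
  simp only [OffsetAdj, List.mem_append, or_and_right, exists_or]

def place {n : ℕ} (i : ZMod n) (x : Fin 4 × ℤ) : Fin 4 × ZMod n := (x.1, i + x.2)

theorem place_injective {n : ℕ} (i : ZMod n) {x y : Fin 4 × ℤ} (hxy : |y.2 - x.2| < n)
    (h : place i x = place i y) : x = y := by
  obtain ⟨j, m⟩ := x
  obtain ⟨k, m'⟩ := y
  simp only [place, Prod.mk.injEq, add_right_inj] at h
  rw [ZMod.intCast_eq_intCast_iff_of_abs_lt (by rwa [abs_sub_comm])] at h
  rw [h.1, h.2]

theorem offsetAdj_place_iff {n : ℕ} {L : Fin 4 → Fin 4 → List ℤ}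
    (hL : ∀ j k, ∀ e ∈ L j k, |e| ≤ 1) (i : ZMod n) {x y : Fin 4 × ℤ}
    (hxy : |y.2 - x.2| < n - 1) :
    OffsetAdj L (place i x) (place i y) ↔ OffsetAdj L x y := by
  simp only [OffsetAdj, place, Int.cast_id]
  refine exists_congr fun e => and_congr_right fun he => ?_
  rw [add_assoc, add_right_inj, ← Int.cast_add, ZMod.intCast_eq_intCast_iff_of_abs_lt]
  have := hL _ _ e he
  rw [abs_le] at this
  rw [abs_lt] at hxy ⊢
  constructor <;> omega

def NoInducedSquareNearZero (L : Fin 4 → Fin 4 → List ℤ) : Prop :=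
  ∀ ja jb jc jd : Fin 4, ∀ mb ∈ Finset.Icc (-1 : ℤ) 1, ∀ mc ∈ Finset.Icc (-2 : ℤ) 2,
    ∀ md ∈ Finset.Icc (-1 : ℤ) 1,
    ¬IsInducedSquare (OffsetAdj L) (ja, 0) (jb, mb) (jc, mc) (jd, md)

/-- Every edge moves the index by at most one, so an induced square sits within the window of
`NoInducedSquareNearZero` around its corner `a`; as `4 < n`, all index differences inside that
window are represented faithfully in `ZMod n`. -/
theorem not_isInducedSquare_of_noInducedSquareNearZero {n : ℕ} (hn : 4 < n)
    {L : Fin 4 → Fin 4 → List ℤ} (hL : ∀ j k, ∀ e ∈ L j k, |e| ≤ 1)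
    (hwin : NoInducedSquareNearZero L) (a b c d : Fin 4 × ZMod n) :
    ¬IsInducedSquare (OffsetAdj L) a b c d := by
  rintro ⟨hab, hbc, hcd, hda, hac, hbd, hac', hbd'⟩
  have ⟨e₁, he₁, hb⟩ := hab
  have ⟨e₂, he₂, hc⟩ := hbc
  have ⟨e₃, he₃, hd⟩ := hda
  obtain ⟨ja, i⟩ := a
  obtain ⟨jb, i₁⟩ := b
  obtain ⟨jc, i₂⟩ := c
  obtain ⟨jd, i₃⟩ := d
  dsimp only at hb hc hd
  have ha' : ((ja, i) : Fin 4 × ZMod n) = place i (ja, 0) := by simp [place]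
  have hb' : ((jb, i₁) : Fin 4 × ZMod n) = place i (jb, e₁) := by simp [place, hb]
  have hc' : ((jc, i₂) : Fin 4 × ZMod n) = place i (jc, e₁ + e₂) := by
    simp [place, hc, hb, add_assoc]
  have hd' : ((jd, i₃) : Fin 4 × ZMod n) = place i (jd, -e₃) := by simp [place, hd]
  simp only [ha', hb', hc', hd'] at hab hbc hcd hda hac hbd hac' hbd'
  have h₁ := hL _ _ _ he₁
  have h₂ := hL _ _ _ he₂
  have h₃ := hL _ _ _ he₃
  rw [abs_le] at h₁ h₂ h₃
  have key (x y : Fin 4 × ℤ) (hxy : |y.2 - x.2| < n - 1) :=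
    offsetAdj_place_iff hL i hxy
  refine hwin ja jb jc jd e₁ ?_ (e₁ + e₂) ?_ (-e₃) ?_
    ⟨(key _ _ ?_).1 hab, (key _ _ ?_).1 hbc, (key _ _ ?_).1 hcd, (key _ _ ?_).1 hda,
      mt (key _ _ ?_).2 hac, mt (key _ _ ?_).2 hbd, mt (congrArg (place i)) hac',
      mt (congrArg (place i)) hbd'⟩
  all_goals first
    | (rw [Finset.mem_Icc]; omega)
    | (dsimp only; rw [abs_lt]; omega)

def fullOffsets (ε : ℤ) (j k : Fin 4) : List ℤ := ladderOffsets j k ++ diagOffsets ε j k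

theorem noInducedSquareNearZero_fullOffsets {ε : ℤ} (hε : ε = 1 ∨ ε = -1) :
    NoInducedSquareNearZero (fullOffsets ε) := by
  unfold NoInducedSquareNearZero
  rcases hε with rfl | rfl <;> decide

theorem abs_le_one_of_mem_fullOffsets {ε : ℤ} (hε : ε = 1 ∨ ε = -1) :
    ∀ j k, ∀ e ∈ fullOffsets ε j k, |e| ≤ 1 := by
  rcases hε with rfl | rfl <;> decide

theorem isEmpty_C4_embedding_ladder_sup {p : ℕ} (hp : 2 ≤ p)
    {D : Set (Sym2 (Fin 4 × ZMod (4 * p)))} {ε : ℤ} (hε : ε = 1 ∨ ε = -1)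
    (hD : ∀ x y, (fromEdgeSet D).Adj x y ↔ OffsetAdj (diagOffsets ε) x y) :
    IsEmpty (C4 ↪g (ladder p ⊔ fromEdgeSet D)) := by
  have hadj : (ladder p ⊔ fromEdgeSet D).Adj = OffsetAdj (fullOffsets ε) := by
    ext x y
    rw [sup_adj, ladder_adj_iff, hD]
    exact (offsetAdj_append x y).symm
  rw [isEmpty_C4_embedding_iff, hadj]
  exact not_isInducedSquare_of_noInducedSquareNearZero (by omega)
    (abs_le_one_of_mem_fullOffsets hε) (noInducedSquareNearZero_fullOffsets hε)

theorem ladder_adj_place_iff {p : ℕ} (hp : 2 ≤ p) (i : ZMod (4 * p)) {x y : Fin 4 × ℤ}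
    (hxy : |y.2 - x.2| ≤ 2) :
    (ladder p).Adj (place i x) (place i y) ↔ OffsetAdj ladderOffsets x y := by
  rw [ladder_adj_iff]
  refine offsetAdj_place_iff (by decide) i ?_
  rw [abs_le] at hxy
  rw [abs_lt]
  push_cast
  constructor <;> omega

theorem fst_eq_of_fromEdgeSet_adj {p : ℕ} {F : Set (Sym2 (Fin 4 × ZMod (4 * p)))}
    (hF : F ⊆ diagT p ∪ diagB p) {x y : Fin 4 × ZMod (4 * p)} (h : (fromEdgeSet F).Adj x y) :
    (x.1 = 0 ∧ y.1 = 1) ∨ (x.1 = 1 ∧ y.1 = 0) := by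
  rcases hF ((fromEdgeSet_adj _).1 h).1 with ⟨i, hi⟩ | ⟨i, hi⟩ <;>
    rcases Sym2.eq_iff.1 hi with ⟨rfl, rfl⟩ | ⟨rfl, rfl⟩ <;> simp

theorem sup_adj_place_of_offsetAdj {p : ℕ} (hp : 2 ≤ p) (F : Set (Sym2 (Fin 4 × ZMod (4 * p))))
    (i : ZMod (4 * p)) {x y : Fin 4 × ℤ} (hxy : |y.2 - x.2| ≤ 2)
    (h : OffsetAdj ladderOffsets x y) : (ladder p ⊔ fromEdgeSet F).Adj (place i x) (place i y) :=
  .inl ((ladder_adj_place_iff hp i hxy).2 h)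

theorem not_sup_adj_place {p : ℕ} (hp : 2 ≤ p) {F : Set (Sym2 (Fin 4 × ZMod (4 * p)))}
    (hF : F ⊆ diagT p ∪ diagB p) (i : ZMod (4 * p)) {x y : Fin 4 × ℤ} (hxy : |y.2 - x.2| ≤ 2)
    (hlad : ¬OffsetAdj ladderOffsets x y) (hkind : ¬((x.1 = 0 ∧ y.1 = 1) ∨ (x.1 = 1 ∧ y.1 = 0))) :
    ¬(ladder p ⊔ fromEdgeSet F).Adj (place i x) (place i y) := by
  rw [sup_adj, ladder_adj_place_iff hp i hxy]
  exact not_or.2 ⟨hlad, fun h => hkind (fst_eq_of_fromEdgeSet_adj hF h)⟩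

theorem isInducedSquare_of_not_mem_of_not_mem {p : ℕ} (hp : 2 ≤ p)
    {F : Set (Sym2 (Fin 4 × ZMod (4 * p)))}
    (i : ZMod (4 * p)) (hT : s((0, i), (1, i + 1)) ∉ F) (hB : s((0, i + 1), (1, i)) ∉ F) :
    IsInducedSquare (ladder p ⊔ fromEdgeSet F).Adj
      (place i (0, 0)) (place i (0, 1)) (place i (1, 1)) (place i (1, 0)) := by
  refine ⟨sup_adj_place_of_offsetAdj hp F i (by decide) (by decide),
    sup_adj_place_of_offsetAdj hp F i (by decide) (by decide),
    sup_adj_place_of_offsetAdj hp F i (by decide) (by decide),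
    sup_adj_place_of_offsetAdj hp F i (by decide) (by decide), ?_, ?_, by simp [place],
    by simp [place]⟩ <;>
  rw [sup_adj, ladder_adj_place_iff hp i (by decide), fromEdgeSet_adj, not_or] <;>
  refine ⟨by decide, fun h => ?_⟩
  · exact hT (by simpa [place] using h.1)
  · exact hB (by simpa [place] using h.1)

theorem isInducedSquare_of_mem_diagT_of_mem_diagB_succ {p : ℕ} (hp : 2 ≤ p)
    {F : Set (Sym2 (Fin 4 × ZMod (4 * p)))} (hF : F ⊆ diagT p ∪ diagB p) (i : ZMod (4 * p))
    (hT : s((0, i), (1, i + 1)) ∈ F) (hB : s((0, i + 2), (1, i + 1)) ∈ F) :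
    IsInducedSquare (ladder p ⊔ fromEdgeSet F).Adj
      (place i (0, 0)) (place i (1, 1)) (place i (0, 2)) (place i (2, 1)) := by
  refine ⟨.inr ((fromEdgeSet_adj _).2 ⟨by simpa [place] using hT, by simp [place]⟩),
    .inr ((fromEdgeSet_adj _).2 ⟨by simpa [place, Sym2.eq_swap] using hB, by simp [place]⟩),
    sup_adj_place_of_offsetAdj hp F i (by decide) (by decide),
    sup_adj_place_of_offsetAdj hp F i (by decide) (by decide),
    not_sup_adj_place hp hF i (by decide) (by decide) (by decide),
    not_sup_adj_place hp hF i (by decide) (by decide) (by decide),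
    fun h => absurd (place_injective i (by simp; omega) h) (by decide), by simp [place]⟩

theorem isInducedSquare_of_mem_diagB_of_mem_diagT_succ {p : ℕ} (hp : 2 ≤ p)
    {F : Set (Sym2 (Fin 4 × ZMod (4 * p)))} (hF : F ⊆ diagT p ∪ diagB p) (i : ZMod (4 * p))
    (hB : s((0, i + 1), (1, i)) ∈ F) (hT : s((0, i + 1), (1, i + 2)) ∈ F) :
    IsInducedSquare (ladder p ⊔ fromEdgeSet F).Adj
      (place i (1, 0)) (place i (0, 1)) (place i (1, 2)) (place i (3, 1)) := by
  refine ⟨.inr ((fromEdgeSet_adj _).2 ⟨by simpa [place, Sym2.eq_swap] using hB,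
      by simp [place]⟩),
    .inr ((fromEdgeSet_adj _).2 ⟨by simpa [place] using hT, by simp [place]⟩),
    sup_adj_place_of_offsetAdj hp F i (by decide) (by decide),
    sup_adj_place_of_offsetAdj hp F i (by decide) (by decide),
    not_sup_adj_place hp hF i (by decide) (by decide) (by decide),
    not_sup_adj_place hp hF i (by decide) (by decide) (by decide),
    fun h => absurd (place_injective i (by simp; omega) h) (by decide), by simp [place]⟩

theorem eq_diagT_or_eq_diagB {p : ℕ} (hp : 2 ≤ p) {F : Set (Sym2 (Fin 4 × ZMod (4 * p)))}
    (hF : F ⊆ diagT p ∪ diagB p)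
    (hfree : ∀ a b c d, ¬IsInducedSquare (ladder p ⊔ fromEdgeSet F).Adj a b c d) :
    F = diagT p ∨ F = diagB p := by
  have : NeZero (4 * p) := ⟨by omega⟩
  have h₂ (i : ZMod (4 * p)) : i + 1 + 1 = i + 2 := by ring
  rcases ZMod.forall_and_not_or_forall_and_not
      (P := fun i => s((0, i), (1, i + 1)) ∈ F) (Q := fun i => s((0, i + 1), (1, i)) ∈ F)
      (fun i => by
        by_contra! h
        exact hfree _ _ _ _ (isInducedSquare_of_not_mem_of_not_mem hp i h.1 h.2))
      (fun i hT hB => hfree _ _ _ _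
        (isInducedSquare_of_mem_diagT_of_mem_diagB_succ hp hF i hT (by rwa [h₂] at hB)))
      (fun i hB hT => hfree _ _ _ _
        (isInducedSquare_of_mem_diagB_of_mem_diagT_succ hp hF i hB (by rwa [h₂] at hT)))
    with h | h
  · refine .inl ((Disjoint.subset_left_of_subset_union hF ?_).antisymm ?_)
    · exact Set.disjoint_left.2 fun e he ⟨i, hi⟩ => (h i).2 (hi ▸ he)
    · exact fun e ⟨i, hi⟩ => hi ▸ (h i).1
  · refine .inr ((Disjoint.subset_right_of_subset_union hF ?_).antisymm ?_)
    · exact Set.disjoint_left.2 fun e he ⟨i, hi⟩ => (h i).2 (hi ▸ he)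
    · exact fun e ⟨i, hi⟩ => hi ▸ (h i).1

/-- The fillable non-edges of the cyclic ladder gadget are exactly the
diagonals; there are exactly two sets `F` of fillable non-edges such that the
ladder plus `F` is `C4`-free: all of `diagT p`, or all of `diagB p`. -/
theorem ladder_two_solutions (p : ℕ) (hp : 2 ≤ p) :
    {F : Set (Sym2 (Fin 4 × ZMod (4 * p))) | F ⊆ diagT p ∪ diagB p ∧
        IsEmpty (C4 ↪g (ladder p ⊔ SimpleGraph.fromEdgeSet F))} =
      {diagT p, diagB p} := by
  ext F
  simp only [Set.mem_ofPred_eq, Set.mem_insert_iff, Set.mem_singleton_iff]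
  refine ⟨fun ⟨hF, hfree⟩ => eq_diagT_or_eq_diagB hp hF ((isEmpty_C4_embedding_iff _).1 hfree),
    ?_⟩
  rintro (rfl | rfl)
  · exact ⟨Set.subset_union_left,
      isEmpty_C4_embedding_ladder_sup hp (.inl rfl) fromEdgeSet_diagT_adj_iff⟩
  · exact ⟨Set.subset_union_right,
      isEmpty_C4_embedding_ladder_sup hp (.inr rfl) fromEdgeSet_diagB_adj_iff⟩
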